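/- arXiv:2506.08834 — 5 statements merged into one kernel-verified Lean document; each statement's English description precedes it below -/
import Mathlib

section
/- Identify ℝ^{n+3} = ℝ × ℝ^{n+1} × ℝ and write vectors as (a, w, b). (a) For every contact element (p, ξ), the vectors k₁ = (1, p, 0) and k₂ = (0, ξ, 1) are lightlike, linearly independent, and satisfy ⟨k₁, k₂⟩ = 0, so they span a line on the Lie quadric. (b) Conversely, for every pair x, y of nonzero, linearly independent lightlike vectors with ⟨x, y⟩ = 0, there exists a unique contact element (p, ξ) such that span{x, y} = span{(1, p, 0), (0, ξ, 1)}. Thus the map (p, ξ) ↦ [(1,p,0), (0,ξ,1)] is a bijection from T₁S^n onto the set of projective lines lying on the Lie quadric. -/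
open scoped RealInnerProductSpace

/-- The bilinear form of signature `(n+1,2)` on `ℝ^{n+3} = ℝ × ℝ^{n+1} × ℝ`,
writing vectors as `(a, w, b)`:  `⟨(a,w,b),(a',w',b')⟩ = -aa' + w·w' - bb'`. -/
noncomputable def lieFormP (n : ℕ) (x y : ℝ × EuclideanSpace ℝ (Fin (n + 1)) × ℝ) : ℝ :=
  -(x.1 * y.1) + ⟪x.2.1, y.2.1⟫ - x.2.2 * y.2.2

/-!
A line on the Lie quadric is a totally isotropic plane `W`. The only vectors of `W` with
vanishing first and last coordinates are lightlike vectors `(0, w, 0)`, i.e. `0`; so the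
projection `(a, w, b) ↦ (a, b)` is injective on `W`, hence an isomorphism `W ≅ ℝ²`.
The preimages of `(1, 0)` and `(0, 1)` are `(1, p, 0)` and `(0, ξ, 1)`, and isotropy of
this basis of `W` says exactly that `(p, ξ)` is a contact element; injectivity makes it unique.
-/

open Module Submodule

def outerCoords (M : Type*) [AddCommGroup M] [Module ℝ M] : (ℝ × M × ℝ) →ₗ[ℝ] ℝ × ℝ :=
  LinearMap.fst ℝ ℝ (M × ℝ) |>.prod (LinearMap.snd ℝ M ℝ ∘ₗ LinearMap.snd ℝ ℝ (M × ℝ))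

@[simp]
lemma outerCoords_apply {M : Type*} [AddCommGroup M] [Module ℝ M] (z : ℝ × M × ℝ) :
    outerCoords M z = (z.1, z.2.2) := rfl

lemma linearIndependent_mk_one_zero_mk_zero_one {M : Type*} [AddCommGroup M] [Module ℝ M]
    (p ξ : M) : LinearIndependent ℝ ![((1 : ℝ), p, (0 : ℝ)), ((0 : ℝ), ξ, (1 : ℝ))] := by
  rw [LinearIndependent.pair_iff]
  intro s t h
  simpa using congrArg (outerCoords M) h

lemma finrank_span_pair {K M : Type*} [DivisionRing K] [AddCommGroup M] [Module K M] {x y : M}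
    (h : LinearIndependent K ![x, y]) : finrank K (span K {x, y}) = 2 := by
  have := finrank_span_eq_card h
  rwa [Matrix.range_cons_cons_empty, Fintype.card_fin] at this

lemma span_pair_eq_of_finrank_eq_two {K M : Type*} [DivisionRing K] [AddCommGroup M]
    [Module K M] {W : Submodule K M} [FiniteDimensional K W] {x y : M}
    (h : LinearIndependent K ![x, y]) (hx : x ∈ W) (hy : y ∈ W) (hW : finrank K W = 2) :
    span K {x, y} = W :=
  eq_of_le_of_finrank_eq (span_le.mpr (Set.pair_subset hx hy)) (by rw [finrank_span_pair h, hW])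

section LieForm

variable {n : ℕ}

@[simp]
lemma lieFormP_mk (a b a' b' : ℝ) (w w' : EuclideanSpace ℝ (Fin (n + 1))) :
    lieFormP n (a, w, b) (a', w', b') = -(a * a') + ⟪w, w'⟫ - b * b' := rfl

lemma lieFormP_smul_add_smul (x y : ℝ × EuclideanSpace ℝ (Fin (n + 1)) × ℝ) (s t s' t' : ℝ) :
    lieFormP n (s • x + t • y) (s' • x + t' • y) =
      s * s' * lieFormP n x x + (s * t' + t * s') * lieFormP n x y +
        t * t' * lieFormP n y y := by
  simp only [lieFormP, Prod.fst_add, Prod.smul_fst, Prod.snd_add, Prod.smul_snd, smul_eq_mul,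
    inner_add_left, inner_add_right, real_inner_smul_left, real_inner_smul_right,
    real_inner_comm y.2.1 x.2.1]
  ring

lemma lieFormP_eq_zero_of_mem_span_pair {x y u v : ℝ × EuclideanSpace ℝ (Fin (n + 1)) × ℝ}
    (hxx : lieFormP n x x = 0) (hyy : lieFormP n y y = 0) (hxy : lieFormP n x y = 0)
    (hu : u ∈ span ℝ {x, y}) (hv : v ∈ span ℝ {x, y}) : lieFormP n u v = 0 := by
  obtain ⟨s, t, rfl⟩ := mem_span_pair.mp hu
  obtain ⟨s', t', rfl⟩ := mem_span_pair.mp hv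
  rw [lieFormP_smul_add_smul, hxx, hyy, hxy]
  ring

lemma eq_zero_of_lieFormP_self_eq_zero {z : ℝ × EuclideanSpace ℝ (Fin (n + 1)) × ℝ}
    (hz : lieFormP n z z = 0) (h : outerCoords _ z = 0) : z = 0 := by
  obtain ⟨a, w, b⟩ := z
  obtain ⟨rfl, rfl⟩ : a = 0 ∧ b = 0 := by simpa using h
  have hw : ⟪w, w⟫ = 0 := by simpa using hz
  simp [inner_self_eq_zero.mp hw]

lemma lieFormP_mk_one_zero_mk_zero_one_iff (p ξ : EuclideanSpace ℝ (Fin (n + 1))) :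
    (lieFormP n ((1 : ℝ), p, (0 : ℝ)) ((1 : ℝ), p, (0 : ℝ)) = 0 ∧
      lieFormP n ((0 : ℝ), ξ, (1 : ℝ)) ((0 : ℝ), ξ, (1 : ℝ)) = 0 ∧
      lieFormP n ((1 : ℝ), p, (0 : ℝ)) ((0 : ℝ), ξ, (1 : ℝ)) = 0) ↔
      ‖p‖ = 1 ∧ ‖ξ‖ = 1 ∧ ⟪p, ξ⟫ = 0 := by
  simp [neg_add_eq_sub, sub_eq_zero, pow_eq_one_iff_of_nonneg (norm_nonneg _)]

variable {W : Submodule ℝ (ℝ × EuclideanSpace ℝ (Fin (n + 1)) × ℝ)}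

lemma eq_of_outerCoords_eq_of_isotropic (hW : ∀ u ∈ W, ∀ v ∈ W, lieFormP n u v = 0) {u v}
    (hu : u ∈ W) (hv : v ∈ W) (h : outerCoords _ u = outerCoords _ v) : u = v :=
  sub_eq_zero.mp <| eq_zero_of_lieFormP_self_eq_zero (hW _ (W.sub_mem hu hv) _ (W.sub_mem hu hv))
    (by rw [map_sub, h, sub_self])

lemma exists_mk_one_zero_mem_and_mk_zero_one_mem (hW : ∀ u ∈ W, ∀ v ∈ W, lieFormP n u v = 0)
    (hdim : finrank ℝ W = 2) :
    ∃ p ξ, ((1 : ℝ), p, (0 : ℝ)) ∈ W ∧ ((0 : ℝ), ξ, (1 : ℝ)) ∈ W := by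
  have hinj : Function.Injective ((outerCoords _).domRestrict W) := fun u v h =>
    Subtype.ext (eq_of_outerCoords_eq_of_isotropic hW u.2 v.2 h)
  have hsurj := (LinearMap.injective_iff_surjective_of_finrank_eq_finrank
    (by simp [hdim])).mp hinj
  obtain ⟨⟨⟨a, p, b⟩, hp⟩, hp'⟩ := hsurj (1, 0)
  obtain ⟨⟨⟨c, ξ, d⟩, hξ⟩, hξ'⟩ := hsurj (0, 1)
  obtain ⟨rfl, rfl⟩ : a = 1 ∧ b = 0 := by simpa using hp'
  obtain ⟨rfl, rfl⟩ : c = 0 ∧ d = 1 := by simpa using hξ'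
  exact ⟨p, ξ, hp, hξ⟩

end LieForm

/-- (a) For every contact element `(p, ξ)` of `Sⁿ`, the vectors `k₁ = (1,p,0)` and
`k₂ = (0,ξ,1)` are lightlike, linearly independent, and satisfy `⟨k₁,k₂⟩ = 0`, so they
span a line on the Lie quadric.
(b) Conversely, for every pair `x, y` of nonzero, linearly independent lightlike vectors
with `⟨x,y⟩ = 0`, there is a unique contact element `(p, ξ)` with
`span{x,y} = span{(1,p,0), (0,ξ,1)}`.  Thus `(p,ξ) ↦ [(1,p,0),(0,ξ,1)]` is a bijection
from `T₁Sⁿ` onto the set of projective lines lying on the Lie quadric. -/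
theorem contact_elements_correspond_to_lines (n : ℕ) :
    (∀ p ξ : EuclideanSpace ℝ (Fin (n + 1)), ‖p‖ = 1 → ‖ξ‖ = 1 → ⟪p, ξ⟫ = 0 →
      lieFormP n ((1 : ℝ), p, (0 : ℝ)) ((1 : ℝ), p, (0 : ℝ)) = 0 ∧
      lieFormP n ((0 : ℝ), ξ, (1 : ℝ)) ((0 : ℝ), ξ, (1 : ℝ)) = 0 ∧
      lieFormP n ((1 : ℝ), p, (0 : ℝ)) ((0 : ℝ), ξ, (1 : ℝ)) = 0 ∧
      LinearIndependent ℝ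
        ![(((1 : ℝ), p, (0 : ℝ)) : ℝ × EuclideanSpace ℝ (Fin (n + 1)) × ℝ),
          ((0 : ℝ), ξ, (1 : ℝ))]) ∧
    (∀ x y : ℝ × EuclideanSpace ℝ (Fin (n + 1)) × ℝ, x ≠ 0 → y ≠ 0 →
      LinearIndependent ℝ ![x, y] →
      lieFormP n x x = 0 → lieFormP n y y = 0 → lieFormP n x y = 0 →
      ∃! pξ : EuclideanSpace ℝ (Fin (n + 1)) × EuclideanSpace ℝ (Fin (n + 1)),
        (‖pξ.1‖ = 1 ∧ ‖pξ.2‖ = 1 ∧ ⟪pξ.1, pξ.2⟫ = 0) ∧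
        Submodule.span ℝ {x, y} =
          Submodule.span ℝ
            {(((1 : ℝ), pξ.1, (0 : ℝ)) : ℝ × EuclideanSpace ℝ (Fin (n + 1)) × ℝ),
             ((0 : ℝ), pξ.2, (1 : ℝ))}) := by
  refine ⟨fun p ξ hp hξ hpξ => ?_, fun x y _ _ hind hxx hyy hxy => ?_⟩
  · obtain ⟨h₁, h₂, h₁₂⟩ := (lieFormP_mk_one_zero_mk_zero_one_iff p ξ).mpr ⟨hp, hξ, hpξ⟩
    exact ⟨h₁, h₂, h₁₂, linearIndependent_mk_one_zero_mk_zero_one p ξ⟩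
  set W := span ℝ {x, y}
  have hW : ∀ u ∈ W, ∀ v ∈ W, lieFormP n u v = 0 := fun _ hu _ hv =>
    lieFormP_eq_zero_of_mem_span_pair hxx hyy hxy hu hv
  have hdim := finrank_span_pair hind
  obtain ⟨p, ξ, hp, hξ⟩ := exists_mk_one_zero_mem_and_mk_zero_one_mem hW hdim
  refine ⟨(p, ξ), ⟨(lieFormP_mk_one_zero_mk_zero_one_iff p ξ).mp
    ⟨hW _ hp _ hp, hW _ hξ _ hξ, hW _ hp _ hξ⟩,
    (span_pair_eq_of_finrank_eq_two (linearIndependent_mk_one_zero_mk_zero_one p ξ) hp hξ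
      hdim).symm⟩, ?_⟩
  rintro ⟨p', ξ'⟩ ⟨-, hspan'⟩
  have hp' : ((1 : ℝ), p', (0 : ℝ)) ∈ W := hspan' ▸ subset_span (Set.mem_insert _ _)
  have hξ' : ((0 : ℝ), ξ', (1 : ℝ)) ∈ W := hspan' ▸ subset_span (Set.mem_insert_of_mem _ rfl)
  exact Prod.ext (congrArg (·.2.1) (eq_of_outerCoords_eq_of_isotropic hW hp' hp rfl))
    (congrArg (·.2.1) (eq_of_outerCoords_eq_of_isotropic hW hξ' hξ rfl))
end

section
/- Let (p, ξ) be a contact element and let x ∈ S^n with x ≠ p. Then there exists a unique r ∈ (0, π) such that cos r = x · (cos r p + sin r ξ). That is, x lies on precisely one unoriented sphere of the parabolic pencil of unoriented spheres determined by (p, ξ). -/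
open scoped RealInnerProductSpace

open Real Set

/-- On `(0, π)` the equation `cos r * c = sin r * b` says `cot r = b / c`, and `π / 2 - r`
ranges over the interval on which `tan` inverts `arctan`. -/
theorem Real.cos_mul_eq_sin_mul_iff {r b c : ℝ} (hr : r ∈ Ioo 0 π) (hc : c ≠ 0) :
    cos r * c = sin r * b ↔ r = π / 2 - arctan (b / c) := by
  have hsin : sin r ≠ 0 := (sin_pos_of_pos_of_lt_pi hr.1 hr.2).ne'
  have hmem : π / 2 - r ∈ Ioo (-(π / 2)) (π / 2) := ⟨by linarith [hr.2], by linarith [hr.1]⟩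
  calc cos r * c = sin r * b
      ↔ tan (π / 2 - r) = b / c := by
        rw [tan_eq_sin_div_cos, sin_pi_div_two_sub, cos_pi_div_two_sub,
          div_eq_div_iff hsin hc, mul_comm (sin r)]
    _ ↔ arctan (b / c) = π / 2 - r :=
        ⟨fun h => arctan_eq_of_tan_eq h hmem, fun h => h ▸ tan_arctan _⟩
    _ ↔ r = π / 2 - arctan (b / c) := by constructor <;> intro h <;> linarith

theorem Real.existsUnique_mem_Ioo_cos_mul_eq_sin_mul (b : ℝ) {c : ℝ} (hc : c ≠ 0) :
    ∃! r : ℝ, r ∈ Ioo 0 π ∧ cos r * c = sin r * b := by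
  have hmem := arctan_mem_Ioo (b / c)
  have hr : π / 2 - arctan (b / c) ∈ Ioo 0 π := ⟨by linarith [hmem.2], by linarith [hmem.1]⟩
  exact ⟨_, ⟨hr, (cos_mul_eq_sin_mul_iff hr hc).2 rfl⟩,
    fun r ⟨hr, h⟩ => (cos_mul_eq_sin_mul_iff hr hc).1 h⟩

theorem exists_unique_pencil_radius_general (n : ℕ)
    (p ξ : EuclideanSpace ℝ (Fin (n + 1))) (hp : ‖p‖ = 1)
    (x : EuclideanSpace ℝ (Fin (n + 1))) (hx : ‖x‖ = 1) (hxp : x ≠ p) :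
    ∃! r : ℝ, r ∈ Set.Ioo 0 Real.pi ∧
      Real.cos r = ⟪x, Real.cos r • p + Real.sin r • ξ⟫ := by
  have hc : 1 - ⟪x, p⟫ ≠ 0 :=
    sub_ne_zero.2 ((inner_lt_one_iff_real_of_norm_eq_one hx hp).2 hxp).ne'
  have hiff : ∀ r : ℝ, cos r = ⟪x, cos r • p + sin r • ξ⟫ ↔
      cos r * (1 - ⟪x, p⟫) = sin r * ⟪x, ξ⟫ := fun r => by
    rw [inner_add_right, real_inner_smul_right, real_inner_smul_right]
    constructor <;> intro h <;> linarith
  simpa only [hiff] using existsUnique_mem_Ioo_cos_mul_eq_sin_mul ⟪x, ξ⟫ hc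

/-- Let `(p, ξ)` be a contact element of `Sⁿ` and let `x ∈ Sⁿ` with `x ≠ p`.  Then there is a
unique `r ∈ (0, π)` with `cos r = x · (cos r p + sin r ξ)`: the point `x` lies on precisely
one unoriented sphere of the parabolic pencil of unoriented spheres determined by `(p, ξ)`. -/
theorem exists_unique_pencil_radius (n : ℕ)
    (p ξ : EuclideanSpace ℝ (Fin (n + 1))) (hp : ‖p‖ = 1) (hξ : ‖ξ‖ = 1)
    (hpξ : ⟪p, ξ⟫ = 0) (x : EuclideanSpace ℝ (Fin (n + 1))) (hx : ‖x‖ = 1) (hxp : x ≠ p) :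
    ∃! r : ℝ, r ∈ Set.Ioo 0 Real.pi ∧
      Real.cos r = ⟪x, Real.cos r • p + Real.sin r • ξ⟫ :=
  exists_unique_pencil_radius_general n p ξ hp x hx hxp
end

section
/- Let (p, ξ) be a contact element, let s ∈ (0, π), and let x ∈ S^n with x ≠ p. Then r_{(p,ξ)}(x) ≤ s if and only if x·(cos s p + sin s ξ) ≥ cos s. Consequently, each sublevel set {x ∈ S^n ∖ {p} : r_{(p,ξ)}(x) ≤ s} equals the intersection of S^n ∖ {p} with the closed spherical ball of radius s centered at cos s p + sin s ξ. -/
open scoped RealInnerProductSpace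

/-- Let `(p, ξ)` be a contact element of `Sⁿ`, let `ρ` be the function `r_{(p,ξ)}`, and let
`s ∈ (0, π)`.  For a unit vector `x ≠ p` one has `ρ x ≤ s` iff
`x · (cos s p + sin s ξ) ≥ cos s`.  Consequently, the sublevel set
`{x ∈ Sⁿ ∖ {p} : ρ x ≤ s}` equals the intersection of `Sⁿ ∖ {p}` with the closed spherical
ball of radius `s` centered at `cos s p + sin s ξ`. -/
theorem sublevel_sets_are_balls (n : ℕ)
    (p ξ : EuclideanSpace ℝ (Fin (n + 1))) (hp : ‖p‖ = 1) (hξ : ‖ξ‖ = 1)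
    (hpξ : ⟪p, ξ⟫ = 0) (ρ : EuclideanSpace ℝ (Fin (n + 1)) → ℝ)
    (hρ : ∀ x : EuclideanSpace ℝ (Fin (n + 1)), ‖x‖ = 1 → x ≠ p →
      ρ x ∈ Set.Ioo 0 Real.pi ∧
      Real.cos (ρ x) = ⟪x, Real.cos (ρ x) • p + Real.sin (ρ x) • ξ⟫)
    (s : ℝ) (hs : s ∈ Set.Ioo 0 Real.pi) :
    (∀ x : EuclideanSpace ℝ (Fin (n + 1)), ‖x‖ = 1 → x ≠ p →
      (ρ x ≤ s ↔ ⟪x, Real.cos s • p + Real.sin s • ξ⟫ ≥ Real.cos s)) ∧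
    {x : EuclideanSpace ℝ (Fin (n + 1)) | ‖x‖ = 1 ∧ x ≠ p ∧ ρ x ≤ s} =
      {x : EuclideanSpace ℝ (Fin (n + 1)) | ‖x‖ = 1 ∧ x ≠ p} ∩
      {x : EuclideanSpace ℝ (Fin (n + 1)) |
        ‖x‖ = 1 ∧ ⟪x, Real.cos s • p + Real.sin s • ξ⟫ ≥ Real.cos s} := by
  have main : ∀ x : EuclideanSpace ℝ (Fin (n + 1)), ‖x‖ = 1 → x ≠ p →
      (ρ x ≤ s ↔ ⟪x, Real.cos s • p + Real.sin s • ξ⟫ ≥ Real.cos s) := by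
    intro x hx hxp
    obtain ⟨⟨hr0, hrπ⟩, heq⟩ := hρ x hx hxp
    set r := ρ x with hrdef
    set a := ⟪x, p⟫ with hadef
    set b := ⟪x, ξ⟫ with hbdef
    rw [inner_add_right, real_inner_smul_right, real_inner_smul_right] at heq
    have heq' : Real.cos r = a * Real.cos r + b * Real.sin r := by
      linear_combination heq
    have hinner : ⟪x, Real.cos s • p + Real.sin s • ξ⟫
        = a * Real.cos s + b * Real.sin s := by
      rw [inner_add_right, real_inner_smul_right, real_inner_smul_right]; ring
    have ha1 : a < 1 := by
      rcases lt_or_eq_of_le (real_inner_le_norm x p) with h | h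
      · rwa [hx, hp, mul_one] at h
      · exact absurd ((inner_eq_one_iff_of_norm_eq_one hx hp).mp (by rw [h, hx, hp, mul_one])) hxp
    have hsinr : 0 < Real.sin r := Real.sin_pos_of_pos_of_lt_pi hr0 hrπ
    have hb : b * Real.sin r = (1 - a) * Real.cos r := by linarith [heq']
    have key : (b * Real.sin s - (1 - a) * Real.cos s) * Real.sin r
        = (1 - a) * Real.sin (s - r) := by
      rw [Real.sin_sub]
      linear_combination Real.sin s * hb
    have hinner' : ⟪x, Real.cos s • p + Real.sin s • ξ⟫ ≥ Real.cos s
        ↔ 0 ≤ b * Real.sin s - (1 - a) * Real.cos s := by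
      rw [hinner]; constructor <;> intro h <;> nlinarith
    rw [hinner']
    constructor
    · intro h
      have h1 : 0 ≤ Real.sin (s - r) :=
        Real.sin_nonneg_of_nonneg_of_le_pi (by linarith) (by linarith [hs.2])
      nlinarith
    · intro h
      by_contra hc
      push_neg at hc
      have h1 : Real.sin (s - r) < 0 := by
        have : 0 < Real.sin (r - s) :=
          Real.sin_pos_of_pos_of_lt_pi (by linarith) (by linarith [hs.1])
        rw [show s - r = -(r - s) by ring, Real.sin_neg]; linarith
      nlinarith
  refine ⟨main, ?_⟩
  ext x
  simp only [Set.mem_setOf_eq, Set.mem_inter_iff]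
  constructor
  · rintro ⟨h1, h2, h3⟩
    exact ⟨⟨h1, h2⟩, h1, (main x h1 h2).mp h3⟩
  · rintro ⟨⟨h1, h2⟩, _, h3⟩
    exact ⟨h1, h2, (main x h1 h2).mpr h3⟩
end

section
/- Let (p, ξ) be a contact element, let r ∈ (0, π), and set q = cos r p + sin r ξ and v = −sin r p + cos r ξ. Then for every x ∈ S^n with x·q = cos r (i.e., x on the sphere of radius r of the parabolic pencil determined by (p,ξ)), one has x·v ≥ −sin r, with equality if and only if x = p. In particular, for every point x₀ ≠ p of this sphere, sin r + x₀·(−sin r p + cos r ξ) > 0. -/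
open scoped RealInnerProductSpace

private lemma pencil_aux (s c a b t : ℝ) (hs : 0 < s) (hcs : c ^ 2 + s ^ 2 = 1)
    (hq : c * a + s * b = c) (ht : t = -s * a + c * b) (hB : a ^ 2 + b ^ 2 ≤ 1) :
    t ≥ -s ∧ (t = -s → a = 1) := by
  have h1 : (c * a + s * b) ^ 2 + (-s * a + c * b) ^ 2 = (a ^ 2 + b ^ 2) * (c ^ 2 + s ^ 2) := by
    ring
  rw [hq, hcs, mul_one] at h1
  have hkey : c ^ 2 + t ^ 2 = a ^ 2 + b ^ 2 := by rw [ht]; linarith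
  have ht2 : t ^ 2 ≤ s ^ 2 := by nlinarith
  constructor
  · nlinarith
  · intro he
    have h2 : -s * a + c * b = -s := by rw [← ht, he]
    linear_combination c * hq - s * h2 + (1 - a) * hcs

/-- Let `(p, ξ)` be a contact element of `Sⁿ`, let `r ∈ (0, π)`, and set
`q = cos r p + sin r ξ` and `v = -sin r p + cos r ξ`.  For every `x ∈ Sⁿ` with `x·q = cos r`
(i.e. `x` on the sphere of radius `r` of the parabolic pencil determined by `(p, ξ)`), one has
`x·v ≥ -sin r`, with equality iff `x = p`.  In particular, for every point `x ≠ p` of this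
sphere, `sin r + x·(-sin r p + cos r ξ) > 0`. -/
theorem pencil_sphere_min_of_geodesic_direction (n : ℕ)
    (p ξ : EuclideanSpace ℝ (Fin (n + 1))) (hp : ‖p‖ = 1) (hξ : ‖ξ‖ = 1)
    (hpξ : ⟪p, ξ⟫ = 0) (r : ℝ) (hr : r ∈ Set.Ioo 0 Real.pi) :
    ∀ x : EuclideanSpace ℝ (Fin (n + 1)), ‖x‖ = 1 →
      ⟪x, Real.cos r • p + Real.sin r • ξ⟫ = Real.cos r →
      (⟪x, -Real.sin r • p + Real.cos r • ξ⟫ ≥ -Real.sin r ∧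
       (⟪x, -Real.sin r • p + Real.cos r • ξ⟫ = -Real.sin r ↔ x = p) ∧
       (x ≠ p → 0 < Real.sin r + ⟪x, -Real.sin r • p + Real.cos r • ξ⟫)) := by
  intro x hx hq
  have hspos : 0 < Real.sin r := Real.sin_pos_of_pos_of_lt_pi hr.1 hr.2
  have hcs : Real.cos r ^ 2 + Real.sin r ^ 2 = 1 := by
    rw [add_comm]; exact Real.sin_sq_add_cos_sq r
  have hξp : ⟪ξ, p⟫ = 0 := by rw [real_inner_comm]; exact hpξ
  have hpp : ⟪p, p⟫ = 1 := by rw [real_inner_self_eq_norm_sq, hp]; norm_num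
  have hξξ : ⟪ξ, ξ⟫ = 1 := by rw [real_inner_self_eq_norm_sq, hξ]; norm_num
  have hxx : ⟪x, x⟫ = 1 := by rw [real_inner_self_eq_norm_sq, hx]; norm_num
  have hpx : ⟪p, x⟫ = ⟪x, p⟫ := by rw [real_inner_comm]
  have hξx : ⟪ξ, x⟫ = ⟪x, ξ⟫ := by rw [real_inner_comm]
  have hq' : Real.cos r * ⟪x, p⟫ + Real.sin r * ⟪x, ξ⟫ = Real.cos r := by
    rw [inner_add_right, real_inner_smul_right, real_inner_smul_right] at hq
    exact hq
  have hv : ⟪x, -Real.sin r • p + Real.cos r • ξ⟫ =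
      -Real.sin r * ⟪x, p⟫ + Real.cos r * ⟪x, ξ⟫ := by
    rw [inner_add_right, real_inner_smul_right, real_inner_smul_right]
  have hB : ⟪x, p⟫ ^ 2 + ⟪x, ξ⟫ ^ 2 ≤ 1 := by
    have h0 : (0:ℝ) ≤ ⟪x - (⟪x, p⟫ • p + ⟪x, ξ⟫ • ξ), x - (⟪x, p⟫ • p + ⟪x, ξ⟫ • ξ)⟫ :=
      real_inner_self_nonneg
    simp only [inner_sub_left, inner_sub_right, inner_add_left, inner_add_right,
      real_inner_smul_left, real_inner_smul_right, hxx, hpp, hξξ, hpξ, hξp, hpx, hξx] at h0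
    nlinarith [h0]
  obtain ⟨hge, heq⟩ := pencil_aux (Real.sin r) (Real.cos r) ⟪x, p⟫ ⟪x, ξ⟫
    (-Real.sin r * ⟪x, p⟫ + Real.cos r * ⟪x, ξ⟫) hspos hcs hq' rfl hB
  have hiff : ⟪x, -Real.sin r • p + Real.cos r • ξ⟫ = -Real.sin r ↔ x = p := by
    rw [hv]
    constructor
    · intro he
      exact (inner_eq_one_iff_of_norm_eq_one hx hp).mp (heq he)
    · intro he
      subst he
      rw [hpp, hpξ]; ring
  refine ⟨by rw [hv]; exact hge, hiff, ?_⟩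
  intro hne
  have hge' : -Real.sin r ≤ ⟪x, -Real.sin r • p + Real.cos r • ξ⟫ := by rw [hv]; exact hge
  rcases lt_or_eq_of_le hge' with h | h
  · linarith
  · exact absurd (hiff.mp h.symm) hne
end

section
/- Let V be a smooth manifold with dim V < n, let φ : V → ℝ^{n+1} be a smooth immersion (its differential is injective at every point) with ‖φ(x)‖ = 1 for all x ∈ V, and let (p, ξ) be a contact element with p ∉ φ(V). Let ρ : V → ℝ be a smooth function with ρ(x) ∈ (0, π) and cos ρ(x) = φ(x)·(cos ρ(x) p + sin ρ(x) ξ) for all x ∈ V (i.e., ρ = r_{(p,ξ)} ∘ φ). Then a point x₀ ∈ V is a critical point of ρ (the differential of ρ at x₀ is zero) if and only if X·(cos ρ(x₀) p + sin ρ(x₀) ξ) = 0 for every vector X in the image of the differential of φ at x₀; that is, if and only if the sphere of the parabolic pencil determined by (p,ξ) through φ(x₀) is tangent to the submanifold φ(V) at φ(x₀). -/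
open scoped RealInnerProductSpace Manifold

/-!
Write `c r = cos r • p + sin r • ξ` for the centre of the pencil sphere of radius `r`, so that
`c' r = cos r • ξ - sin r • p`, which is `pencilCenter ξ (-p) r`. Differentiating
`cos ρ = ⟪φ, c ρ⟫` along `V` gives `⟪dφ v, c ρ⟫ + A · dρ v = 0` with `A = sin ρ + ⟪φ, c' ρ⟫`.
Since `cos r · (cos r - ⟪y, c r⟫) + sin r · (sin r + ⟪y, c' r⟫) = 1 - ⟪y, p⟫`, the coefficient
`A` can only vanish where `⟪φ, p⟫ = 1`, i.e. where `φ = p`; away from `p` the two differentials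
therefore vanish together.
-/

section ChainRule

variable {𝕜 : Type*} [NontriviallyNormedField 𝕜]
  {E : Type*} [NormedAddCommGroup E] [NormedSpace 𝕜 E] {H : Type*} [TopologicalSpace H]
  {I : ModelWithCorners 𝕜 E H} {M : Type*} [TopologicalSpace M] [ChartedSpace H M]
  {F₁ : Type*} [NormedAddCommGroup F₁] [NormedSpace 𝕜 F₁]
  {F₂ : Type*} [NormedAddCommGroup F₂] [NormedSpace 𝕜 F₂]
  {G : Type*} [NormedAddCommGroup G] [NormedSpace 𝕜 G]

theorem HasMFDerivAt.prodMk_space {f : M → F₁} {g : M → F₂} {x : M}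
    {f' : TangentSpace I x →L[𝕜] F₁} {g' : TangentSpace I x →L[𝕜] F₂}
    (hf : HasMFDerivAt I 𝓘(𝕜, F₁) f x f') (hg : HasMFDerivAt I 𝓘(𝕜, F₂) g x g') :
    HasMFDerivAt I 𝓘(𝕜, F₁ × F₂) (fun y ↦ (f y, g y)) x (f'.prod g') :=
  ⟨hf.1.prodMk hg.1, hf.2.prodMk hg.2⟩

theorem HasFDerivAt.comp_hasMFDerivAt_eq_zero_of_const {Φ : F₁ → G} {Φ' : F₁ →L[𝕜] G}
    {h : M → F₁} {x : M} {h' : TangentSpace I x →L[𝕜] F₁} {c : G}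
    (hΦ : HasFDerivAt Φ Φ' (h x)) (hh : HasMFDerivAt I 𝓘(𝕜, F₁) h x h')
    (hc : ∀ y, Φ (h y) = c) : Φ'.comp h' = 0 := by
  have hcomp : HasMFDerivAt I 𝓘(𝕜, G) (Φ ∘ h) x (Φ'.comp h') := hΦ.hasMFDerivAt.comp x hh
  have hconst : HasMFDerivAt I 𝓘(𝕜, G) (Φ ∘ h) x 0 := by
    rw [show Φ ∘ h = fun _ ↦ c from funext hc]
    exact hasMFDerivAt_const c x
  exact hcomp.mfderiv.symm.trans hconst.mfderiv

end ChainRule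

section Pencil

variable {E : Type*} [NormedAddCommGroup E] [InnerProductSpace ℝ E]

noncomputable def pencilCenter (p ξ : E) (r : ℝ) : E := Real.cos r • p + Real.sin r • ξ

theorem hasDerivAt_pencilCenter (p ξ : E) (r : ℝ) :
    HasDerivAt (pencilCenter p ξ) (pencilCenter ξ (-p) r) r := by
  refine (((Real.hasDerivAt_cos r).smul_const p).add
    ((Real.hasDerivAt_sin r).smul_const ξ)).congr_deriv ?_
  simp only [pencilCenter, smul_neg, neg_smul]
  abel

theorem hasFDerivAt_inner_pencilCenter_sub_cos (p ξ y : E) (r : ℝ) :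
    HasFDerivAt (fun q : ℝ × E ↦ ⟪q.2, pencilCenter p ξ q.1⟫ - Real.cos q.1)
      ((innerSL ℝ (pencilCenter p ξ r)).comp (ContinuousLinearMap.snd ℝ ℝ E) +
        (Real.sin r + ⟪y, pencilCenter ξ (-p) r⟫) • ContinuousLinearMap.fst ℝ ℝ E) (r, y) := by
  have hfst := hasFDerivAt_fst (𝕜 := ℝ) (p := (r, y))
  have hc := (hasDerivAt_pencilCenter p ξ r).hasFDerivAt.comp (r, y) hfst
  have hcos := (Real.hasDerivAt_cos r).hasFDerivAt.comp (r, y) hfst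
  refine ((hasFDerivAt_snd.inner ℝ hc).sub hcos).congr_fderiv ?_
  refine ContinuousLinearMap.ext fun q ↦ ?_
  simp only [Function.comp_apply, sub_apply, add_apply, smul_apply, ContinuousLinearMap.comp_apply,
    ContinuousLinearMap.prod_apply, ContinuousLinearMap.coe_snd', ContinuousLinearMap.coe_fst',
    ContinuousLinearMap.toSpanSingleton_apply, fderivInnerCLM_apply, coe_innerSL_apply,
    real_inner_smul_right, real_inner_comm q.2, smul_eq_mul]
  ring

theorem cos_mul_add_sin_mul_inner_pencilCenter (p ξ y : E) (r : ℝ) :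
    Real.cos r * (Real.cos r - ⟪y, pencilCenter p ξ r⟫) +
      Real.sin r * (Real.sin r + ⟪y, pencilCenter ξ (-p) r⟫) = 1 - ⟪y, p⟫ := by
  simp only [pencilCenter, inner_add_right, inner_smul_right, inner_neg_right]
  linear_combination (1 - ⟪y, p⟫) * Real.sin_sq_add_cos_sq r

theorem sin_add_inner_pencilCenter_ne_zero {p ξ y : E} {r : ℝ} (hp : ‖p‖ = 1) (hy : ‖y‖ = 1)
    (hyp : y ≠ p) (hr : Real.cos r = ⟪y, pencilCenter p ξ r⟫) :
    Real.sin r + ⟪y, pencilCenter ξ (-p) r⟫ ≠ 0 := by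
  intro h
  have hyp_one : ⟪y, p⟫ = 1 := by
    have hid := cos_mul_add_sin_mul_inner_pencilCenter p ξ y r
    rw [← hr, sub_self, h, mul_zero, mul_zero, add_zero] at hid
    linarith
  exact hyp ((inner_eq_one_iff_of_norm_eq_one hy hp).1 hyp_one)

variable {H : Type*} [TopologicalSpace H] {F : Type*} [NormedAddCommGroup F] [NormedSpace ℝ F]
  {I : ModelWithCorners ℝ F H} {M : Type*} [TopologicalSpace M] [ChartedSpace H M]

theorem inner_pencilCenter_add_mul_eq_zero_of_hasMFDerivAt {p ξ : E} {ρ : M → ℝ} {φ : M → E}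
    {x₀ : M} {ρ' : TangentSpace I x₀ →L[ℝ] ℝ} {φ' : TangentSpace I x₀ →L[ℝ] E}
    (hρ : HasMFDerivAt I 𝓘(ℝ, ℝ) ρ x₀ ρ') (hφ : HasMFDerivAt I 𝓘(ℝ, E) φ x₀ φ')
    (h : ∀ x, Real.cos (ρ x) = ⟪φ x, pencilCenter p ξ (ρ x)⟫) (v : TangentSpace I x₀) :
    ⟪φ' v, pencilCenter p ξ (ρ x₀)⟫ +
      (Real.sin (ρ x₀) + ⟪φ x₀, pencilCenter ξ (-p) (ρ x₀)⟫) * ρ' v = 0 := by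
  have hΦ := hasFDerivAt_inner_pencilCenter_sub_cos p ξ (φ x₀) (ρ x₀)
  have h0 := hΦ.comp_hasMFDerivAt_eq_zero_of_const (h := fun x ↦ (ρ x, φ x))
    (hρ.prodMk_space hφ) (fun x ↦ sub_eq_zero.2 (h x).symm)
  rw [real_inner_comm]
  simpa using DFunLike.congr_fun h0 v

theorem HasMFDerivAt.eq_zero_iff_forall_inner_pencilCenter_eq_zero {p ξ : E} {ρ : M → ℝ}
    {φ : M → E} {x₀ : M} {ρ' : TangentSpace I x₀ →L[ℝ] ℝ} {φ' : TangentSpace I x₀ →L[ℝ] E}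
    (hρ : HasMFDerivAt I 𝓘(ℝ, ℝ) ρ x₀ ρ') (hφ : HasMFDerivAt I 𝓘(ℝ, E) φ x₀ φ')
    (h : ∀ x, Real.cos (ρ x) = ⟪φ x, pencilCenter p ξ (ρ x)⟫) (hp : ‖p‖ = 1) (hφx₀ : ‖φ x₀‖ = 1)
    (hφp : φ x₀ ≠ p) :
    ρ' = 0 ↔ ∀ v, ⟪φ' v, pencilCenter p ξ (ρ x₀)⟫ = 0 := by
  have key := inner_pencilCenter_add_mul_eq_zero_of_hasMFDerivAt hρ hφ h
  have hA := sin_add_inner_pencilCenter_ne_zero hp hφx₀ hφp (h x₀)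
  constructor
  · rintro rfl v
    simpa using key v
  · intro h0
    ext v
    have hv := key v
    rw [h0 v, zero_add] at hv
    exact (mul_eq_zero.1 hv).resolve_left hA

end Pencil

theorem critical_point_iff_pencil_sphere_tangent_general (n k : ℕ)
    {V : Type*} [TopologicalSpace V] [ChartedSpace (EuclideanSpace ℝ (Fin k)) V]
    (φ : V → EuclideanSpace ℝ (Fin (n + 1)))
    (hφ : ContMDiff (𝓡 k) 𝓘(ℝ, EuclideanSpace ℝ (Fin (n + 1))) (⊤ : ℕ∞) φ)
    (hunit : ∀ x : V, ‖φ x‖ = 1)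
    (p ξ : EuclideanSpace ℝ (Fin (n + 1))) (hp : ‖p‖ = 1)
    (hpV : p ∉ Set.range φ)
    (ρ : V → ℝ) (hρs : ContMDiff (𝓡 k) 𝓘(ℝ, ℝ) (⊤ : ℕ∞) ρ)
    (hρ : ∀ x : V, ρ x ∈ Set.Ioo 0 Real.pi ∧
      Real.cos (ρ x) = ⟪φ x, Real.cos (ρ x) • p + Real.sin (ρ x) • ξ⟫)
    (x₀ : V) :
    mfderiv (𝓡 k) 𝓘(ℝ, ℝ) ρ x₀ = 0 ↔
      ∀ v : TangentSpace (𝓡 k) x₀,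
        @inner ℝ (EuclideanSpace ℝ (Fin (n + 1))) _
          (mfderiv (𝓡 k) 𝓘(ℝ, EuclideanSpace ℝ (Fin (n + 1))) φ x₀ v)
          (Real.cos (ρ x₀) • p + Real.sin (ρ x₀) • ξ) = 0 := by
  exact HasMFDerivAt.eq_zero_iff_forall_inner_pencilCenter_eq_zero
    ((hρs x₀).mdifferentiableAt (by simp)).hasMFDerivAt
    ((hφ x₀).mdifferentiableAt (by simp)).hasMFDerivAt
    (fun x ↦ (hρ x).2) hp (hunit x₀) (fun h ↦ hpV ⟨x₀, h⟩)

/-- Let `V` be a smooth manifold of dimension `k < n`, let `φ : V → ℝ^{n+1}` be a smooth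
immersion taking values in the unit sphere `Sⁿ`, and let `(p, ξ)` be a contact element with
`p ∉ φ(V)`.  Let `ρ : V → ℝ` be the smooth function with `ρ x ∈ (0,π)` and
`cos (ρ x) = φ(x)·(cos (ρ x) p + sin (ρ x) ξ)` (i.e. `ρ = r_{(p,ξ)} ∘ φ`).  Then `x₀ ∈ V`
is a critical point of `ρ` iff `X·(cos (ρ x₀) p + sin (ρ x₀) ξ) = 0` for every `X` in the
image of the differential of `φ` at `x₀`, i.e. iff the sphere of the parabolic pencil
determined by `(p, ξ)` through `φ(x₀)` is tangent to `φ(V)` at `φ(x₀)`. -/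
theorem critical_point_iff_pencil_sphere_tangent (n k : ℕ) (hk : k < n)
    {V : Type*} [TopologicalSpace V] [ChartedSpace (EuclideanSpace ℝ (Fin k)) V]
    [IsManifold (𝓡 k) (⊤ : ℕ∞) V]
    (φ : V → EuclideanSpace ℝ (Fin (n + 1)))
    (hφ : ContMDiff (𝓡 k) 𝓘(ℝ, EuclideanSpace ℝ (Fin (n + 1))) (⊤ : ℕ∞) φ)
    (himm : ∀ x : V,
      Function.Injective (mfderiv (𝓡 k) 𝓘(ℝ, EuclideanSpace ℝ (Fin (n + 1))) φ x))
    (hunit : ∀ x : V, ‖φ x‖ = 1)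
    (p ξ : EuclideanSpace ℝ (Fin (n + 1))) (hp : ‖p‖ = 1) (hξ : ‖ξ‖ = 1)
    (hpξ : ⟪p, ξ⟫ = 0) (hpV : p ∉ Set.range φ)
    (ρ : V → ℝ) (hρs : ContMDiff (𝓡 k) 𝓘(ℝ, ℝ) (⊤ : ℕ∞) ρ)
    (hρ : ∀ x : V, ρ x ∈ Set.Ioo 0 Real.pi ∧
      Real.cos (ρ x) = ⟪φ x, Real.cos (ρ x) • p + Real.sin (ρ x) • ξ⟫)
    (x₀ : V) :
    mfderiv (𝓡 k) 𝓘(ℝ, ℝ) ρ x₀ = 0 ↔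
      ∀ v : TangentSpace (𝓡 k) x₀,
        @inner ℝ (EuclideanSpace ℝ (Fin (n + 1))) _
          (mfderiv (𝓡 k) 𝓘(ℝ, EuclideanSpace ℝ (Fin (n + 1))) φ x₀ v)
          (Real.cos (ρ x₀) • p + Real.sin (ρ x₀) • ξ) = 0 :=
  critical_point_iff_pencil_sphere_tangent_general n k φ hφ hunit p ξ hp hpV ρ hρs hρ x₀
end
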